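/- In the setting of the well-posedness energy bound, if in addition the contravariant coefficient matrices have vanishing divergence, Σᵢ₌₁³ ∂Ãⁱ/∂ξⁱ ≡ 0 on E × [0,T] (in particular if each Ãⁱ is constant in ξ), then the weighted energy never grows: ∫_E J(ξ,T) ‖q(ξ,T)‖² dξ ≤ ∫_E J(ξ,0) ‖q(ξ,0)‖² dξ. -/

import Mathlib

/-!
Along a solution, `J ‖q‖²` is transported by the fluxes `qᵀ𝒜ⁱq`: differentiating and using the
symmetry of `𝒜ⁱ`, `∂τ(J ‖q‖²) + Σᵢ ∂ᵢ(qᵀ𝒜ⁱq) = 2 q·(∂τ(Jq) + Σᵢ ∂ᵢ(𝒜ⁱq)) - qᵀ(∂τJ + Σᵢ ∂ᵢ𝒜ⁱ)q`,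
where the first term vanishes by the equation and `Σᵢ ∂ᵢ𝒜ⁱ = Σᵢ ∂ᵢÃⁱ - (Σᵢ ∂ᵢvⁱ) Id = -∂τJ Id` by
the divergence-free condition and the GCL. Integrating this conservation law over the space-time
box, the divergence theorem equates the energy loss between `τ = 0` and `τ = T` with the net
outward flux through the spatial faces, which the boundary condition makes nonnegative.
-/

open Matrix MeasureTheory

section Calculus

variable {X : Type*} [NormedAddCommGroup X] [NormedSpace ℝ X] {ι κ : Type*} {p : X}

/-- Entrywise directional derivative: matrices carry no global norm in Mathlib, so `fderiv` does
not apply to a matrix-valued map itself. -/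
noncomputable def matrixFDeriv (M : X → Matrix ι κ ℝ) (p w : X) : Matrix ι κ ℝ :=
  Matrix.of fun a b => fderiv ℝ (fun x => M x a b) p w

section SubSmulOne

variable [DecidableEq κ]

lemma differentiableAt_sub_smul_one_apply {A : X → Matrix κ κ ℝ} {v : X → ℝ}
    (hA : ∀ a b, DifferentiableAt ℝ (fun x => A x a b) p) (hv : DifferentiableAt ℝ v p) (a b : κ) :
    DifferentiableAt ℝ (fun x => (A x - v x • (1 : Matrix κ κ ℝ)) a b) p := by
  simp only [Matrix.sub_apply, Matrix.smul_apply, smul_eq_mul]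
  fun_prop

lemma matrixFDeriv_sub_smul_one {A : X → Matrix κ κ ℝ} {v : X → ℝ}
    (hA : ∀ a b, DifferentiableAt ℝ (fun x => A x a b) p) (hv : DifferentiableAt ℝ v p) (w : X) :
    matrixFDeriv (fun x => A x - v x • (1 : Matrix κ κ ℝ)) p w
      = matrixFDeriv A p w - fderiv ℝ v p w • 1 := by
  ext a b
  simp only [matrixFDeriv, of_apply, Matrix.sub_apply, Matrix.smul_apply, smul_eq_mul]
  rw [fderiv_fun_sub (hA a b) (hv.mul_const _), fderiv_mul_const hv]
  simp [mul_comm]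

end SubSmulOne

variable [Fintype κ]

lemma DifferentiableAt.dotProduct {f g : X → κ → ℝ} (hf : DifferentiableAt ℝ f p)
    (hg : DifferentiableAt ℝ g p) : DifferentiableAt ℝ (fun x => f x ⬝ᵥ g x) p := by
  simp only [_root_.dotProduct]
  fun_prop

lemma fderiv_dotProduct_apply {f g : X → κ → ℝ} (hf : DifferentiableAt ℝ f p)
    (hg : DifferentiableAt ℝ g p) (w : X) :
    fderiv ℝ (fun x => f x ⬝ᵥ g x) p w = fderiv ℝ f p w ⬝ᵥ g p + f p ⬝ᵥ fderiv ℝ g p w := by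
  simp only [_root_.dotProduct]
  rw [fderiv_fun_sum fun a _ => by fun_prop]
  simp [fderiv_fun_mul (differentiableAt_pi.1 hf _) (differentiableAt_pi.1 hg _), fderiv_apply hf,
    fderiv_apply hg, ← Finset.sum_add_distrib]
  exact Finset.sum_congr rfl fun a _ => by ring

lemma DifferentiableAt.mulVec {M : X → Matrix ι κ ℝ} {y : X → κ → ℝ}
    (hM : ∀ a b, DifferentiableAt ℝ (fun x => M x a b) p) (hy : DifferentiableAt ℝ y p) :
    DifferentiableAt ℝ (fun x => M x *ᵥ y x) p :=
  differentiableAt_pi.2 fun a => (differentiableAt_pi.2 (hM a)).dotProduct hy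

lemma fderiv_mulVec_apply {M : X → Matrix ι κ ℝ} {y : X → κ → ℝ}
    (hM : ∀ a b, DifferentiableAt ℝ (fun x => M x a b) p) (hy : DifferentiableAt ℝ y p) (w : X) :
    fderiv ℝ (fun x => M x *ᵥ y x) p w = matrixFDeriv M p w *ᵥ y p + M p *ᵥ fderiv ℝ y p w := by
  ext a
  have hrow : DifferentiableAt ℝ (fun x => M x a) p := differentiableAt_pi.2 (hM a)
  rw [← ContinuousLinearMap.proj_apply (R := ℝ) a (fderiv ℝ _ p w),
    ← ContinuousLinearMap.comp_apply, ← fderiv_apply (DifferentiableAt.mulVec hM hy) a]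
  change fderiv ℝ (fun x => M x a ⬝ᵥ y x) p w = _
  rw [fderiv_dotProduct_apply hrow hy, fderiv_pi (hM a)]
  rfl

lemma Matrix.IsSymm.dotProduct_mulVec_comm {A : Matrix κ κ ℝ} (hA : A.IsSymm) (u w : κ → ℝ) :
    u ⬝ᵥ (A *ᵥ w) = w ⬝ᵥ (A *ᵥ u) := by
  rw [dotProduct_mulVec, ← mulVec_transpose, hA.eq, dotProduct_comm]

lemma fderiv_dotProduct_mulVec_self_apply {M : X → Matrix κ κ ℝ} {y : X → κ → ℝ}
    (hM : ∀ a b, DifferentiableAt ℝ (fun x => M x a b) p) (hy : DifferentiableAt ℝ y p)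
    (hsymm : (M p).IsSymm) (w : X) :
    fderiv ℝ (fun x => y x ⬝ᵥ (M x *ᵥ y x)) p w
      = 2 * (y p ⬝ᵥ fderiv ℝ (fun x => M x *ᵥ y x) p w)
        - y p ⬝ᵥ (matrixFDeriv M p w *ᵥ y p) := by
  rw [fderiv_dotProduct_apply hy (.mulVec hM hy), fderiv_mulVec_apply hM hy,
    hsymm.dotProduct_mulVec_comm (fderiv ℝ y p w), dotProduct_add]
  ring

lemma fderiv_mul_dotProduct_self_apply {J : X → ℝ} {y : X → κ → ℝ}
    (hJ : DifferentiableAt ℝ J p) (hy : DifferentiableAt ℝ y p) (w : X) :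
    fderiv ℝ (fun x => J x * (y x ⬝ᵥ y x)) p w
      = 2 * (y p ⬝ᵥ fderiv ℝ (fun x => J x • y x) p w) - fderiv ℝ J p w * (y p ⬝ᵥ y p) := by
  rw [fderiv_fun_mul hJ (hy.dotProduct hy), fderiv_fun_smul hJ hy]
  simp only [_root_.add_apply, _root_.smul_apply, smul_eq_mul, ContinuousLinearMap.smulRight_apply,
    fderiv_dotProduct_apply hy hy, dotProduct_add, dotProduct_smul,
    dotProduct_comm (fderiv ℝ y p w)]
  ring

end Calculus

theorem energy_flux_divergence_eq_zero {X : Type*} [NormedAddCommGroup X] [NormedSpace ℝ X]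
    {ι κ : Type*} [Fintype ι] [Fintype κ] [DecidableEq κ] {J : X → ℝ} {v : ι → X → ℝ}
    {At 𝒜 : ι → X → Matrix κ κ ℝ} {q : X → κ → ℝ} {p eτ : X} {e : ι → X}
    (hJ : DifferentiableAt ℝ J p) (hv : ∀ i, DifferentiableAt ℝ (v i) p)
    (hAt : ∀ i a b, DifferentiableAt ℝ (fun x => At i x a b) p) (hq : DifferentiableAt ℝ q p)
    (h𝒜 : ∀ i x, 𝒜 i x = At i x - v i x • (1 : Matrix κ κ ℝ)) (hsymm : ∀ i, (At i p).IsSymm)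
    (hGCL : fderiv ℝ J p eτ = ∑ i, fderiv ℝ (v i) p (e i))
    (hPDE : fderiv ℝ (fun x => J x • q x) p eτ + ∑ i, fderiv ℝ (fun x => 𝒜 i x *ᵥ q x) p (e i) = 0)
    (hdiv : ∀ a b, ∑ i, fderiv ℝ (fun x => At i x a b) p (e i) = 0) :
    fderiv ℝ (fun x => J x * (q x ⬝ᵥ q x)) p eτ
      + ∑ i, fderiv ℝ (fun x => q x ⬝ᵥ (𝒜 i x *ᵥ q x)) p (e i) = 0 := by
  obtain rfl : 𝒜 = fun i x => At i x - v i x • (1 : Matrix κ κ ℝ) := funext₂ h𝒜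
  have h𝒜d i := differentiableAt_sub_smul_one_apply (hAt i) (hv i)
  have h𝒜symm i : (At i p - v i p • (1 : Matrix κ κ ℝ)).IsSymm :=
    (hsymm i).sub (isSymm_one.smul _)
  have hdivA : ∑ i, matrixFDeriv (At i) p (e i) = 0 := by
    ext a b
    simpa [matrixFDeriv, Matrix.sum_apply] using hdiv a b
  have hdiv𝒜 : ∑ i, matrixFDeriv (fun x => At i x - v i x • (1 : Matrix κ κ ℝ)) p (e i)
      = -fderiv ℝ J p eτ • 1 := by
    simp only [matrixFDeriv_sub_smul_one (hAt _) (hv _), Finset.sum_sub_distrib, hdivA,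
      ← Finset.sum_smul, hGCL, zero_sub, neg_smul]
  calc _ = 2 * (q p ⬝ᵥ (fderiv ℝ (fun x => J x • q x) p eτ
          + ∑ i, fderiv ℝ (fun x => (At i x - v i x • (1 : Matrix κ κ ℝ)) *ᵥ q x) p (e i)))
        - q p ⬝ᵥ ((fderiv ℝ J p eτ • 1
          + ∑ i, matrixFDeriv (fun x => At i x - v i x • (1 : Matrix κ κ ℝ)) p (e i)) *ᵥ q p) := by
        simp only [fderiv_mul_dotProduct_self_apply hJ hq,
          fderiv_dotProduct_mulVec_self_apply (h𝒜d _) hq (h𝒜symm _), dotProduct_add,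
          dotProduct_sum, add_mulVec, sum_mulVec, smul_mulVec, one_mulVec, dotProduct_smul,
          smul_eq_mul, Finset.sum_sub_distrib, ← Finset.mul_sum]
        ring
    _ = 0 := by rw [hPDE, hdiv𝒜]; simp

noncomputable def spaceTimeEquiv (n : ℕ) : ((Fin n → ℝ) × ℝ) ≃L[ℝ] (Fin (n + 1) → ℝ) :=
  LinearEquiv.toContinuousLinearEquiv
    { toFun := fun p => Fin.snoc p.1 p.2
      invFun := fun x => (Fin.init x, x (Fin.last n))
      map_add' := fun p p' => by
        ext i; refine Fin.lastCases ?_ (fun j => ?_) i <;> simp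
      map_smul' := fun c p => by
        ext i; refine Fin.lastCases ?_ (fun j => ?_) i <;> simp
      left_inv := fun p => by simp
      right_inv := fun x => by simp }

section SpaceTime

variable {n : ℕ}

@[simp] lemma spaceTimeEquiv_apply (p : (Fin n → ℝ) × ℝ) :
    spaceTimeEquiv n p = Fin.snoc p.1 p.2 := rfl

lemma spaceTimeEquiv_symm_apply (x : Fin (n + 1) → ℝ) :
    (spaceTimeEquiv n).symm x = (Fin.init x, x (Fin.last n)) := rfl

@[simp] lemma spaceTimeEquiv_symm_snoc (ξ : Fin n → ℝ) (t : ℝ) :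
    (spaceTimeEquiv n).symm (Fin.snoc ξ t) = (ξ, t) := by
  simp [spaceTimeEquiv_symm_apply]

lemma spaceTimeEquiv_le_iff (p p' : (Fin n → ℝ) × ℝ) :
    spaceTimeEquiv n p ≤ spaceTimeEquiv n p' ↔ p ≤ p' := by
  simp [Pi.le_def, Prod.le_def, Fin.forall_iff_castSucc, and_comm]

lemma measurePreserving_spaceTimeEquiv : MeasurePreserving (spaceTimeEquiv n) := by
  have h := (volume_preserving_piFinSuccAbove (fun _ : Fin (n + 1) => ℝ) (Fin.last n)).symm.comp
    (Measure.measurePreserving_swap (μ := (volume : Measure (Fin n → ℝ)))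
      (ν := (volume : Measure ℝ)))
  convert h using 1
  · funext p; simp [Fin.snocEquiv]
  · exact Measure.volume_eq_prod _ _

lemma spaceTimeEquiv_symm_single_castSucc (k : Fin n) :
    (spaceTimeEquiv n).symm (Pi.single k.castSucc 1) = (Pi.single k 1, 0) := by
  ext j
  · simp [spaceTimeEquiv_symm_apply, Fin.init, Pi.single_apply]
  · simp [spaceTimeEquiv_symm_apply, (Fin.castSucc_lt_last k).ne]

lemma spaceTimeEquiv_symm_single_last :
    (spaceTimeEquiv n).symm (Pi.single (Fin.last n) 1) = (0, 1) := by
  ext j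
  · simp [spaceTimeEquiv_symm_apply, Fin.init, (Fin.castSucc_lt_last j).ne]
  · simp [spaceTimeEquiv_symm_apply]

lemma spaceTimeEquiv_symm_insertNth_castSucc_fst (k : Fin n) (c : ℝ) (x : Fin n → ℝ) :
    ((spaceTimeEquiv n).symm (k.castSucc.insertNth c x)).1 k = c := by
  simp [spaceTimeEquiv_symm_apply, Fin.init]

lemma spaceTimeEquiv_symm_insertNth_mem_Icc {lo hi : (Fin n → ℝ) × ℝ} {i : Fin (n + 1)} {c : ℝ}
    {x : Fin n → ℝ} (hc : c ∈ Set.Icc (spaceTimeEquiv n lo i) (spaceTimeEquiv n hi i))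
    (hx : x ∈ Set.Icc (spaceTimeEquiv n lo ∘ i.succAbove) (spaceTimeEquiv n hi ∘ i.succAbove)) :
    (spaceTimeEquiv n).symm (i.insertNth c x) ∈ Set.Icc lo hi := by
  obtain ⟨hlo, hhi⟩ := Fin.insertNth_mem_Icc.2 ⟨hc, hx⟩
  exact ⟨(spaceTimeEquiv_le_iff _ _).1 (by simpa using hlo),
    (spaceTimeEquiv_le_iff _ _).1 (by simpa using hhi)⟩

end SpaceTime

open Set in
theorem setIntegral_time_slice_le_of_divergence_eq_zero {n : ℕ} {a b : Fin n → ℝ} {t₀ t₁ : ℝ}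
    (hab : a ≤ b) (ht : t₀ ≤ t₁) {F : (Fin n → ℝ) × ℝ → ℝ} {G : Fin n → (Fin n → ℝ) × ℝ → ℝ}
    (hF : Differentiable ℝ F) (hG : ∀ i, Differentiable ℝ (G i))
    (hdiv : ∀ p ∈ Icc a b ×ˢ Icc t₀ t₁,
      fderiv ℝ F p (0, 1) + ∑ i, fderiv ℝ (G i) p (Pi.single i 1, 0) = 0)
    (hout : ∀ i, ∀ τ ∈ Icc t₀ t₁, ∀ ξ ∈ Icc a b, ξ i = b i → 0 ≤ G i (ξ, τ))
    (hin : ∀ i, ∀ τ ∈ Icc t₀ t₁, ∀ ξ ∈ Icc a b, ξ i = a i → G i (ξ, τ) ≤ 0) :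
    ∫ ξ in Icc a b, F (ξ, t₁) ≤ ∫ ξ in Icc a b, F (ξ, t₀) := by
  set e := spaceTimeEquiv n
  -- the vector field of the divergence theorem on `Fin (n + 1) → ℝ`, time flux last
  set f : Fin (n + 1) → (Fin n → ℝ) × ℝ → ℝ := Fin.snoc G F
  have hf : ∀ i, Differentiable ℝ (f i) := Fin.lastCases (by simpa [f] using hF)
    (fun k => by simpa [f] using hG k)
  have hbox : Icc (a, t₀) (b, t₁) = Icc a b ×ˢ Icc t₀ t₁ := Icc_prod_eq _ _
  have hdiv' : ∀ p ∈ Icc (a, t₀) (b, t₁), ∑ i, fderiv ℝ (f i) p (e.symm (Pi.single i 1)) = 0 := by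
    intro p hp
    rw [hbox] at hp
    simpa [Fin.sum_univ_castSucc, f, e, spaceTimeEquiv_symm_single_castSucc,
      spaceTimeEquiv_symm_single_last, add_comm] using hdiv p hp
  have key := integral_divergence_of_hasFDerivAt_off_countable_of_equiv e spaceTimeEquiv_le_iff
    measurePreserving_spaceTimeEquiv f (fun i x => fderiv ℝ (f i) x) ∅ countable_empty
    (a, t₀) (b, t₁) ⟨hab, ht⟩ (fun i => (hf i).continuous.continuousOn)
    (fun x _ i => (hf i x).hasFDerivAt) _ (fun _ => rfl)
    (integrableOn_zero.congr_fun (fun x hx => (hdiv' x hx).symm) measurableSet_Icc)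
  -- `D i`: net outward flux of `f i` through the two faces of the box orthogonal to axis `i`
  set D : Fin (n + 1) → ℝ := fun i =>
    (∫ x in Icc (e (a, t₀) ∘ i.succAbove) (e (b, t₁) ∘ i.succAbove),
      f i (e.symm (i.insertNth (e (b, t₁) i) x))) -
    ∫ x in Icc (e (a, t₀) ∘ i.succAbove) (e (b, t₁) ∘ i.succAbove),
      f i (e.symm (i.insertNth (e (a, t₀) i) x))
  have hspace : ∀ k : Fin n, 0 ≤ D k.castSucc := by
    intro k
    have hab' : e (a, t₀) k.castSucc ≤ e (b, t₁) k.castSucc := by simpa [e] using hab k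
    refine sub_nonneg.2 ((setIntegral_nonpos measurableSet_Icc fun x hx => ?_).trans
      (setIntegral_nonneg measurableSet_Icc fun x hx => ?_))
    · have hp := hbox ▸ spaceTimeEquiv_symm_insertNth_mem_Icc (left_mem_Icc.2 hab') hx
      have hk := spaceTimeEquiv_symm_insertNth_castSucc_fst k (a k) x
      simpa [f, e] using hin k _ hp.2 _ hp.1 (by simpa using hk)
    · have hp := hbox ▸ spaceTimeEquiv_symm_insertNth_mem_Icc (right_mem_Icc.2 hab') hx
      have hk := spaceTimeEquiv_symm_insertNth_castSucc_fst k (b k) x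
      simpa [f, e] using hout k _ hp.2 _ hp.1 (by simpa using hk)
  have htime : D (Fin.last n) = (∫ ξ in Icc a b, F (ξ, t₁)) - ∫ ξ in Icc a b, F (ξ, t₀) := by
    simp [D, f, e, Function.comp_def]
  rw [setIntegral_eq_zero_of_forall_eq_zero hdiv', Fin.sum_univ_castSucc (f := D), htime] at key
  have hS : 0 ≤ ∑ k : Fin n, D k.castSucc := Finset.sum_nonneg fun k _ => hspace k
  linarith

theorem energy_non_growth_of_divergence_free_general
    (m : ℕ) (T : ℝ) (hT : 0 < T)
    (E : Set (Fin 3 → ℝ)) (hE : E = Set.Icc (fun _ => (-1 : ℝ)) (fun _ => (1 : ℝ)))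
    (J : (Fin 3 → ℝ) × ℝ → ℝ) (hJ : ContDiff ℝ 1 J)
    (v : Fin 3 → ((Fin 3 → ℝ) × ℝ → ℝ)) (hv : ∀ i, ContDiff ℝ 1 (v i))
    (At : Fin 3 → ((Fin 3 → ℝ) × ℝ → Matrix (Fin m) (Fin m) ℝ))
    (hAt : ∀ i a b, ContDiff ℝ 1 (fun x => At i x a b))
    (hAtsymm : ∀ i, ∀ p ∈ E ×ˢ Set.Icc (0 : ℝ) T, (At i p).IsSymm)
    (q : (Fin 3 → ℝ) × ℝ → (Fin m → ℝ)) (hq : ContDiff ℝ 1 q)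
    (𝒜 : Fin 3 → ((Fin 3 → ℝ) × ℝ → Matrix (Fin m) (Fin m) ℝ))
    (h𝒜 : ∀ i x, 𝒜 i x = At i x - v i x • (1 : Matrix (Fin m) (Fin m) ℝ))
    (hGCL : ∀ p ∈ E ×ˢ Set.Icc (0 : ℝ) T,
      fderiv ℝ J p (0, 1) = ∑ i : Fin 3, fderiv ℝ (v i) p (Pi.single i 1, 0))
    (hPDE : ∀ p ∈ E ×ˢ Set.Icc (0 : ℝ) T,
      fderiv ℝ (fun x => J x • q x) p (0, 1)
        + ∑ i : Fin 3, fderiv ℝ (fun x => 𝒜 i x *ᵥ q x) p (Pi.single i 1, 0) = 0)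
    -- vanishing divergence of the contravariant coefficient matrices
    (hdivfree : ∀ p ∈ E ×ˢ Set.Icc (0 : ℝ) T, ∀ a b,
      ∑ i : Fin 3, fderiv ℝ (fun x => At i x a b) p (Pi.single i 1, 0) = 0)
    -- nonnegative outward boundary flux
    (hbc : ∀ i : Fin 3, ∀ τ ∈ Set.Icc (0 : ℝ) T, ∀ ξ ∈ E,
      (ξ i = 1 → 0 ≤ q (ξ, τ) ⬝ᵥ (𝒜 i (ξ, τ) *ᵥ q (ξ, τ)))
        ∧ (ξ i = -1 → q (ξ, τ) ⬝ᵥ (𝒜 i (ξ, τ) *ᵥ q (ξ, τ)) ≤ 0)) :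
    ∫ ξ in E, J (ξ, T) * (q (ξ, T) ⬝ᵥ q (ξ, T))
      ≤ ∫ ξ in E, J (ξ, 0) * (q (ξ, 0) ⬝ᵥ q (ξ, 0)) := by
  subst hE
  have hJd := hJ.differentiable one_ne_zero
  have hqd := hq.differentiable one_ne_zero
  have hvd i := (hv i).differentiable one_ne_zero
  have hAtd i a b := (hAt i a b).differentiable one_ne_zero
  have h𝒜d i a b (x : (Fin 3 → ℝ) × ℝ) : DifferentiableAt ℝ (fun x => 𝒜 i x a b) x := by
    simpa only [h𝒜] using
      differentiableAt_sub_smul_one_apply (fun a b => hAtd i a b x) (hvd i x) a b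
  refine setIntegral_time_slice_le_of_divergence_eq_zero (fun _ => by norm_num) hT.le
    (fun x => (hJd x).mul ((hqd x).dotProduct (hqd x)))
    (fun i x => (hqd x).dotProduct (.mulVec (fun a b => h𝒜d i a b x) (hqd x)))
    (fun p hp => energy_flux_divergence_eq_zero (hJd p) (fun i => hvd i p)
      (fun i a b => hAtd i a b p) (hqd p) h𝒜 (fun i => hAtsymm i p hp) (hGCL p hp) (hPDE p hp)
      (hdivfree p hp))
    (fun i τ hτ ξ hξ => (hbc i τ hτ ξ hξ).1) (fun i τ hτ ξ hξ => (hbc i τ hτ ξ hξ).2)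

/-- **Energy non-growth for divergence-free coefficient matrices.** In the
well-posedness setting on `E = [−1,1]³ × [0,T]` (symmetric `Ã i`,
`𝒜 i = Ã i − v i • Id`, `J > 0`, GCL, conservative form of the mapped system,
nonnegative outward boundary flux), if moreover `Σ i ∂Ã i/∂ξ i ≡ 0` on
`E × [0,T]` (in particular if each `Ã i` is constant in `ξ`), then
`∫_E J(·,T)‖q(·,T)‖² ≤ ∫_E J(·,0)‖q(·,0)‖²`. -/
theorem energy_non_growth_of_divergence_free
    (m : ℕ) (hm : 1 ≤ m) (T : ℝ) (hT : 0 < T)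
    (E : Set (Fin 3 → ℝ)) (hE : E = Set.Icc (fun _ => (-1 : ℝ)) (fun _ => (1 : ℝ)))
    (J : (Fin 3 → ℝ) × ℝ → ℝ) (hJ : ContDiff ℝ 1 J)
    (v : Fin 3 → ((Fin 3 → ℝ) × ℝ → ℝ)) (hv : ∀ i, ContDiff ℝ 1 (v i))
    (At : Fin 3 → ((Fin 3 → ℝ) × ℝ → Matrix (Fin m) (Fin m) ℝ))
    (hAt : ∀ i a b, ContDiff ℝ 1 (fun x => At i x a b))
    (hAtsymm : ∀ i, ∀ p ∈ E ×ˢ Set.Icc (0 : ℝ) T, (At i p).IsSymm)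
    (q : (Fin 3 → ℝ) × ℝ → (Fin m → ℝ)) (hq : ContDiff ℝ 1 q)
    (𝒜 : Fin 3 → ((Fin 3 → ℝ) × ℝ → Matrix (Fin m) (Fin m) ℝ))
    (h𝒜 : ∀ i x, 𝒜 i x = At i x - v i x • (1 : Matrix (Fin m) (Fin m) ℝ))
    (hGCL : ∀ p ∈ E ×ˢ Set.Icc (0 : ℝ) T,
      fderiv ℝ J p (0, 1) = ∑ i : Fin 3, fderiv ℝ (v i) p (Pi.single i 1, 0))
    (hPDE : ∀ p ∈ E ×ˢ Set.Icc (0 : ℝ) T,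
      fderiv ℝ (fun x => J x • q x) p (0, 1)
        + ∑ i : Fin 3, fderiv ℝ (fun x => 𝒜 i x *ᵥ q x) p (Pi.single i 1, 0) = 0)
    (hJpos : ∀ p ∈ E ×ˢ Set.Icc (0 : ℝ) T, 0 < J p)
    -- vanishing divergence of the contravariant coefficient matrices
    (hdivfree : ∀ p ∈ E ×ˢ Set.Icc (0 : ℝ) T, ∀ a b,
      ∑ i : Fin 3, fderiv ℝ (fun x => At i x a b) p (Pi.single i 1, 0) = 0)
    -- nonnegative outward boundary flux
    (hbc : ∀ i : Fin 3, ∀ τ ∈ Set.Icc (0 : ℝ) T, ∀ ξ ∈ E,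
      (ξ i = 1 → 0 ≤ q (ξ, τ) ⬝ᵥ (𝒜 i (ξ, τ) *ᵥ q (ξ, τ)))
        ∧ (ξ i = -1 → q (ξ, τ) ⬝ᵥ (𝒜 i (ξ, τ) *ᵥ q (ξ, τ)) ≤ 0)) :
    ∫ ξ in E, J (ξ, T) * (q (ξ, T) ⬝ᵥ q (ξ, T))
      ≤ ∫ ξ in E, J (ξ, 0) * (q (ξ, 0) ⬝ᵥ q (ξ, 0)) :=
  energy_non_growth_of_divergence_free_general m T hT E hE J hJ v hv At hAt hAtsymm q hq 𝒜 h𝒜 hGCL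
    hPDE hdivfree hbc
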